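/- Let k, D, N be positive natural numbers, G a subgroup of the permutation group on Fin k, Θ : (Fin k → Fin D) → ℝ a rank-k parameter tensor, and X : Fin N → Fin D → ℝ a matrix of input vectors. Define S(i) = ∑_{σ ∈ G} Θ(i ∘ σ), then O(j) = ∑_{i : Fin k → Fin D} (∏_{t : Fin k} X (j t) (i t)) · S(i), and finally P(j) = exp(O(j)) / ∑_{j' : Fin k → Fin N} exp(O(j')). Then the output tensor P is G-symmetric: for every σ ∈ G and every j : Fin k → Fin N, P(j ∘ σ) = P(j). -/
import Mathlib


/-- Theorem A.1 of the paper: the output of the Symmetric Tensor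
Attention layer — symmetrization of `Θ` over `G`, contraction with `k` copies of
`X`, then k-dimensional softmax — is a `G`-symmetric tensor. -/
theorem stmt_3 (k D N : ℕ) (hk : 0 < k) (hD : 0 < D) (hN : 0 < N)
    (G : Subgroup (Equiv.Perm (Fin k))) [Fintype G]
    (Θ : (Fin k → Fin D) → ℝ)
    (X : Fin N → Fin D → ℝ)
    (S : (Fin k → Fin D) → ℝ)
    (hS : ∀ i : Fin k → Fin D,
      S i = ∑ σ : G, Θ (i ∘ ⇑(σ : Equiv.Perm (Fin k))))
    (O : (Fin k → Fin N) → ℝ)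
    (hO : ∀ j : Fin k → Fin N,
      O j = ∑ i : Fin k → Fin D, (∏ t : Fin k, X (j t) (i t)) * S i)
    (P : (Fin k → Fin N) → ℝ)
    (hP : ∀ j : Fin k → Fin N,
      P j = Real.exp (O j) / ∑ j' : Fin k → Fin N, Real.exp (O j'))
    (σ : Equiv.Perm (Fin k)) (hσ : σ ∈ G) (j : Fin k → Fin N) :
    P (j ∘ ⇑σ) = P j := by
  have hSsym : ∀ τ : Equiv.Perm (Fin k), τ ∈ G → ∀ i : Fin k → Fin D,
      S (i ∘ ⇑τ) = S i := by
    intro τ hτ i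
    rw [hS, hS]
    exact Fintype.sum_equiv (Equiv.mulLeft (⟨τ, hτ⟩ : G)) _ _ (fun ρ => by
      congr 1)
  have hOO : O (j ∘ ⇑σ) = O j := by
    rw [hO, hO]
    refine Fintype.sum_equiv (Equiv.arrowCongr σ (Equiv.refl (Fin D))) _ _ ?_
    intro i
    have h1 : ((Equiv.arrowCongr σ (Equiv.refl (Fin D))) i) = i ∘ ⇑σ⁻¹ := by
      ext t; simp [Equiv.Perm.inv_def]
    rw [h1, hSsym σ⁻¹ (inv_mem hσ)]
    congr 1
    exact Fintype.prod_equiv σ _ _ (fun t => by simp)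
  rw [hP, hP, hOO]
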